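/- Let P be a real symmetric positive semidefinite p×p matrix and V a real symmetric positive definite p×p matrix. Then the matrix P − P(P + V⁻¹)⁻¹P has the same rank as P. -/

import Mathlib

open Matrix

namespace Matrix

variable {n R : Type*} [Fintype n] [DecidableEq n]

theorem sub_mul_nonsing_inv_add_mul [CommRing R] (P W : Matrix n n R)
    (hPW : IsUnit (P + W).det) :
    P - P * (P + W)⁻¹ * P = W * ((P + W)⁻¹ * P) :=
  calc P - P * (P + W)⁻¹ * P
      = ((P + W) - P) * ((P + W)⁻¹ * P) := by
        rw [sub_mul, ← mul_assoc, mul_nonsing_inv _ hPW, one_mul, mul_assoc]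
    _ = W * ((P + W)⁻¹ * P) := by rw [add_sub_cancel_left]

theorem rank_sub_mul_nonsing_inv_add_mul [Field R] (P W : Matrix n n R)
    (hW : IsUnit W.det) (hPW : IsUnit (P + W).det) :
    (P - P * (P + W)⁻¹ * P).rank = P.rank := by
  rw [sub_mul_nonsing_inv_add_mul P W hPW, rank_mul_eq_right_of_isUnit_det _ _ hW,
    rank_mul_eq_right_of_isUnit_det _ _ (isUnit_nonsing_inv_det _ hPW)]

end Matrix

theorem stmt_4 (p : ℕ) (P V : Matrix (Fin p) (Fin p) ℝ)
    (hP : P.PosSemidef) (hV : V.PosDef) :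
    (P - P * (P + V⁻¹)⁻¹ * P).rank = P.rank := by
  have hVinv : (V⁻¹).PosDef := hV.inv
  have hPVinv : (P + V⁻¹).PosDef := PosDef.posSemidef_add hP hVinv
  exact rank_sub_mul_nonsing_inv_add_mul P V⁻¹ hVinv.det_pos.ne'.isUnit
    hPVinv.det_pos.ne'.isUnit
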